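/- (Strong Huygens principle for the homogeneous interior source.) Let F : ℝ³ → ℝ be continuous with F(z) = 0 whenever |z| > 1. For t > 0 and x ∈ ℝ³ with |x| < t, define W(t,x) = (1/4π)·∫_{2/t}^{1} ∫_{S²} (1−λ)·t⁻¹·λ⁻³·F((x/t − (1−λ)η)/λ) dσ(η) dλ, and for y ∈ ℝ³ with |y| < 1 define Ũ(y) = (1/4π)·∫_{(1−|y|)/2}^{1} ∫_{S²} (1−λ)·λ⁻³·F((y − (1−λ)η)/λ) dσ(η) dλ. Then for every (t,x) with t − |x| > 4 one has W(t,x) = t⁻¹·Ũ(x/t). -/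

import Mathlib

/-! For `‖η‖ = 1` and `0 < λ < (1 - ‖y‖)/2` we have `‖y - (1 - λ)η‖ ≥ 1 - λ - ‖y‖ > λ`, so
`(y - (1 - λ)η)/λ` lies outside the unit ball and the `λ`-integrand of `Ũ(y)` vanishes. With
`y = x/t`, the condition `t - ‖x‖ > 4` says `2/t < (1 - ‖y‖)/2`, so the part of the `λ`-range of
`W(t,x)` below `(1 - ‖y‖)/2` contributes nothing; on the rest the integrand of `W` is `t⁻¹` times
that of `Ũ`.
-/

noncomputable section

open MeasureTheory Metric Real

/-- Euclidean `ℝ³`. -/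
abbrev E3 := EuclideanSpace ℝ (Fin 3)

/-- The surface measure `σ` on the unit sphere `S² ⊆ ℝ³` (total mass `4π`). -/
def sphMeas : Measure (sphere (0 : E3) 1) := (volume : Measure E3).toSphere

/-- The representation-formula expression
`W(t,x) = (1/4π)·∫_{2/t}^{1} ∫_{S²} (1−λ)·t⁻¹·λ⁻³·F((x/t − (1−λ)η)/λ) dσ(η) dλ`. -/
def Wrep (F : E3 → ℝ) (t : ℝ) (x : E3) : ℝ :=
  (1 / (4 * π)) * ∫ s in (2 / t)..1,
    ∫ η : sphere (0 : E3) 1,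
      (1 - s) * t⁻¹ * (s ^ 3)⁻¹ * F (s⁻¹ • (t⁻¹ • x - (1 - s) • (η : E3))) ∂sphMeas

/-- The interior profile
`Ũ(y) = (1/4π)·∫_{(1−|y|)/2}^{1} ∫_{S²} (1−λ)·λ⁻³·F((y − (1−λ)η)/λ) dσ(η) dλ`. -/
def Utilde (F : E3 → ℝ) (y : E3) : ℝ :=
  (1 / (4 * π)) * ∫ s in ((1 - ‖y‖) / 2)..1,
    ∫ η : sphere (0 : E3) 1,
      (1 - s) * (s ^ 3)⁻¹ * F (s⁻¹ • (y - (1 - s) • (η : E3))) ∂sphMeas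

theorem one_lt_norm_inv_smul_sub_smul {E : Type*} [SeminormedAddCommGroup E] [NormedSpace ℝ E]
    {y η : E} (hη : ‖η‖ = 1) {s : ℝ} (hs : 0 < s) (hsy : s < (1 - ‖y‖) / 2) :
    1 < ‖s⁻¹ • (y - (1 - s) • η)‖ := by
  have hshift : s < ‖(1 - s) • η - y‖ := calc
    s < (1 - s) - ‖y‖ := by linarith
    _ = ‖(1 - s) • η‖ - ‖y‖ := by
      rw [norm_smul, hη, mul_one, Real.norm_of_nonneg (by linarith [norm_nonneg y])]
    _ ≤ ‖(1 - s) • η - y‖ := norm_sub_norm_le _ _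
  rwa [norm_smul, norm_inv, Real.norm_of_nonneg hs.le, inv_mul_eq_div, one_lt_div hs,
    norm_sub_rev]

theorem intervalIntegral.integral_eq_integral_of_eqOn_Ioo_zero {f : ℝ → ℝ} {a b c : ℝ}
    (hab : a ≤ b) (hbc : b ≤ c) (hf : Set.EqOn f 0 (Set.Ioo a b)) :
    ∫ s in a..c, f s = ∫ s in b..c, f s := by
  rw [intervalIntegral.integral_of_le (hab.trans hbc), intervalIntegral.integral_of_le hbc]
  refine setIntegral_eq_of_subset_of_ae_sdiff_eq_zero measurableSet_Ioc.nullMeasurableSet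
    (Set.Ioc_subset_Ioc_left hab) ?_
  filter_upwards [Measure.ae_ne volume b] with s hsb ⟨hs, hs'⟩
  exact hf ⟨hs.1, lt_of_le_of_ne (not_lt.1 fun hbs => hs' ⟨hbs, hs.2⟩) hsb⟩

def sphericalProfile (F : E3 → ℝ) (y : E3) (s : ℝ) : ℝ :=
  ∫ η : sphere (0 : E3) 1, (1 - s) * (s ^ 3)⁻¹ * F (s⁻¹ • (y - (1 - s) • (η : E3))) ∂sphMeas

theorem Utilde_eq_integral_sphericalProfile (F : E3 → ℝ) (y : E3) :
    Utilde F y = 1 / (4 * π) * ∫ s in ((1 - ‖y‖) / 2)..1, sphericalProfile F y s :=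
  rfl

theorem Wrep_eq_integral_sphericalProfile (F : E3 → ℝ) (t : ℝ) (x : E3) :
    Wrep F t x = t⁻¹ * (1 / (4 * π) * ∫ s in (2 / t)..1, sphericalProfile F (t⁻¹ • x) s) := by
  rw [Wrep, mul_left_comm t⁻¹, ← intervalIntegral.integral_const_mul t⁻¹]
  congr 1
  refine intervalIntegral.integral_congr fun s _ => ?_
  rw [sphericalProfile, ← integral_const_mul (μ := sphMeas)]
  congr 1 with η
  ring

theorem sphericalProfile_eq_zero {F : E3 → ℝ} (hsupp : ∀ z : E3, 1 < ‖z‖ → F z = 0) {y : E3}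
    {s : ℝ} (hs : 0 < s) (hsy : s < (1 - ‖y‖) / 2) : sphericalProfile F y s = 0 := by
  have hF : ∀ η : sphere (0 : E3) 1, F (s⁻¹ • (y - (1 - s) • (η : E3))) = 0 := fun η =>
    hsupp _ (one_lt_norm_inv_smul_sub_smul (norm_eq_of_mem_sphere η) hs hsy)
  simp [sphericalProfile, hF]

theorem strong_huygens_self_similar_general
    (F : E3 → ℝ) (hsupp : ∀ z : E3, 1 < ‖z‖ → F z = 0)
    (t : ℝ) (x : E3) (h : 4 < t - ‖x‖) :
    Wrep F t x = t⁻¹ * Utilde F (t⁻¹ • x) := by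
  have ht : 0 < t := by linarith [norm_nonneg x]
  have hnorm : ‖t⁻¹ • x‖ = ‖x‖ / t := by
    rw [norm_smul, norm_inv, Real.norm_of_nonneg ht.le, inv_mul_eq_div]
  have hlower : 2 / t ≤ (1 - ‖t⁻¹ • x‖) / 2 := by
    rw [hnorm, div_le_div_iff₀ ht two_pos, sub_mul, div_mul_cancel₀ _ ht.ne']
    linarith
  have hupper : (1 - ‖t⁻¹ • x‖) / 2 ≤ 1 := by linarith [norm_nonneg (t⁻¹ • x)]
  rw [Wrep_eq_integral_sphericalProfile, Utilde_eq_integral_sphericalProfile,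
    intervalIntegral.integral_eq_integral_of_eqOn_Ioo_zero hlower hupper
      fun s hs => sphericalProfile_eq_zero hsupp ((div_pos two_pos ht).trans hs.1) hs.2]

/-- strong Huygens principle for the homogeneous interior source:
if `F` is continuous and vanishes outside the unit ball, then for `t − |x| > 4`
one has `W(t,x) = t⁻¹·Ũ(x/t)`. -/
theorem strong_huygens_self_similar
    (F : E3 → ℝ) (hF : Continuous F) (hsupp : ∀ z : E3, 1 < ‖z‖ → F z = 0)
    (t : ℝ) (x : E3) (h : 4 < t - ‖x‖) :
    Wrep F t x = t⁻¹ * Utilde F (t⁻¹ • x) :=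
  strong_huygens_self_similar_general F hsupp t x h
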